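/- Let 0 ≤ c < 1, ζ ∈ ℝ, C = c·e^{iζ}, and 0 < R < 1 - c. Set r = (1 + R² - c² - sqrt(((1-R)² - c²)·((1+R)² - c²)))/(2R) and a = C/(1 - R·r). Then 0 < r < 1, |a| < 1, and the Möbius transformation M_a(x) = (x - a)/(conj(a)·x - 1) maps the open ball B(C, R) onto the open ball B(0, r). -/

import Mathlib

/-!
With `u = 1 - R r`, the defining equation of `r` is equivalent to `R (1 + r²) = r (1 + R² - c²)`,
and under it the polynomial identity
`u² (|x - a|² - r² |conj a x - 1|²) = (u² - r² c²) (|x - C|² - R²)`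
holds for every `x`. Since `u² - r² c² > 0`, this says `|M_a x| < r ↔ |x - C| < R`; as `M_a` is an
involution, it maps `B(C, R)` onto `B(0, r)`.
-/

open Complex

/-- The Möbius transformation `M_a(x) = (x - a) / (conj a * x - 1)`. -/
noncomputable def mobius (a x : ℂ) : ℂ := (x - a) / ((starRingEnd ℂ) a * x - 1)

open ComplexConjugate Metric

theorem conj_mul_sub_one_ne_zero {a x : ℂ} (ha : ‖a‖ < 1) (hx : ‖x‖ ≤ 1) :
    conj a * x - 1 ≠ 0 := by
  rw [sub_ne_zero]
  intro h
  have : ‖conj a * x‖ < 1 := by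
    rw [norm_mul, norm_conj]
    exact mul_lt_one_of_nonneg_of_lt_one_left (norm_nonneg a) ha hx
  simp [h] at this

theorem conj_mul_mobius_sub_one {a x : ℂ} (hx : conj a * x - 1 ≠ 0) :
    conj a * mobius a x - 1 = (1 - normSq a) / (conj a * x - 1) := by
  rw [mobius, ← mul_conj, eq_div_iff hx]
  field_simp
  ring

theorem conj_mul_mobius_sub_one_ne_zero {a x : ℂ} (ha : normSq a ≠ 1)
    (hx : conj a * x - 1 ≠ 0) : conj a * mobius a x - 1 ≠ 0 := by
  rw [conj_mul_mobius_sub_one hx]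
  exact div_ne_zero (sub_ne_zero.2 (by exact_mod_cast ha.symm)) hx

theorem mobius_mobius {a x : ℂ} (ha : normSq a ≠ 1) (hx : conj a * x - 1 ≠ 0) :
    mobius a (mobius a x) = x := by
  rw [mobius, div_eq_iff (conj_mul_mobius_sub_one_ne_zero ha hx),
    conj_mul_mobius_sub_one hx, mobius, ← mul_conj, mul_div_assoc', eq_div_iff hx,
    sub_mul, div_mul_cancel₀ _ hx]
  ring

theorem mobius_image_eq {a : ℂ} (ha : normSq a ≠ 1) {S T : Set ℂ}
    (hS : ∀ x ∈ S, conj a * x - 1 ≠ 0) (hT : ∀ z ∈ T, conj a * z - 1 ≠ 0)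
    (hST : ∀ x, conj a * x - 1 ≠ 0 → (x ∈ S ↔ mobius a x ∈ T)) :
    mobius a '' S = T := by
  ext z
  constructor
  · rintro ⟨x, hx, rfl⟩
    exact (hST x (hS x hx)).1 hx
  · intro hz
    have hinv := mobius_mobius ha (hT z hz)
    refine ⟨mobius a z, (hST _ (conj_mul_mobius_sub_one_ne_zero ha (hT z hz))).2 ?_, hinv⟩
    rwa [hinv]

theorem normSq_sub_sub_sq_mul_normSq {a C x : ℂ} {R r : ℝ} (hC : (1 - R * r) * a = C)
    (hrel : R * (1 + r ^ 2) = r * (1 + R ^ 2 - normSq C)) :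
    (1 - R * r) ^ 2 * (normSq (x - a) - r ^ 2 * normSq (conj a * x - 1)) =
      ((1 - R * r) ^ 2 - r ^ 2 * normSq C) * (normSq (x - C) - R ^ 2) := by
  subst hC
  simp only [normSq_apply, mul_re, mul_im, sub_re, sub_im, one_re, one_im, ofReal_re,
    ofReal_im, conj_re, conj_im] at hrel ⊢
  linear_combination (1 - R * r) * (R + r + r * (1 - R * r) * (a.re ^ 2 + a.im ^ 2)
    - 2 * r * (a.re * x.re + a.im * x.im)) * hrel

theorem norm_mobius_lt_iff {a C x : ℂ} {R r : ℝ} (hR : 0 ≤ R) (hr : 0 ≤ r)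
    (hC : (1 - R * r) * a = C) (hrel : R * (1 + r ^ 2) = r * (1 + R ^ 2 - normSq C))
    (hK : r ^ 2 * normSq C < (1 - R * r) ^ 2) (hx : conj a * x - 1 ≠ 0) :
    ‖mobius a x‖ < r ↔ ‖x - C‖ < R := by
  have key := normSq_sub_sub_sq_mul_normSq (x := x) hC hrel
  have hu : 0 < (1 - R * r) ^ 2 := (mul_nonneg (sq_nonneg r) (normSq_nonneg C)).trans_lt hK
  calc ‖mobius a x‖ < r ↔ ‖x - a‖ ^ 2 < (r * ‖conj a * x - 1‖) ^ 2 := by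
        rw [mobius, norm_div, div_lt_iff₀ (norm_pos_iff.2 hx)]
        exact (pow_lt_pow_iff_left₀ (norm_nonneg _) (by positivity) two_ne_zero).symm
    _ ↔ normSq (x - C) < R ^ 2 := by
        rw [mul_pow, ← normSq_eq_norm_sq, ← normSq_eq_norm_sq, ← sub_neg,
          ← mul_lt_mul_iff_right₀ hu, mul_zero, key,
          ← mul_zero ((1 - R * r) ^ 2 - r ^ 2 * normSq C), mul_lt_mul_iff_right₀ (sub_pos.2 hK),
          sub_neg]
    _ ↔ ‖x - C‖ < R := by
        rw [normSq_eq_norm_sq, pow_lt_pow_iff_left₀ (norm_nonneg _) hR two_ne_zero]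

theorem pos_lt_one_and_eq_of_smaller_root {R B r : ℝ} (hR : 0 < R) (hB : 2 * R < B)
    (hr : r = (B - √((B - 2 * R) * (B + 2 * R))) / (2 * R)) :
    0 < r ∧ r < 1 ∧ R * (1 + r ^ 2) = r * B := by
  set s := √((B - 2 * R) * (B + 2 * R))
  have hs0 : 0 ≤ s := Real.sqrt_nonneg _
  have hs2 : s ^ 2 = (B - 2 * R) * (B + 2 * R) := Real.sq_sqrt (by nlinarith)
  have hsB : s < B := by nlinarith
  have hBs : B - 2 * R < s := by nlinarith
  have hRr : 2 * R * r = B - s := by rw [hr]; field_simp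
  refine ⟨?_, ?_, ?_⟩
  · rw [hr]; exact div_pos (by linarith) (by linarith)
  · rw [hr, div_lt_one (by linarith)]; linarith
  · nlinarith

theorem mobius_image_ball {C a : ℂ} {R r : ℝ} (hR : 0 < R) (hr0 : 0 ≤ r) (hr1 : r < 1)
    (hCR : ‖C‖ + R < 1) (hrel : R * (1 + r ^ 2) = r * (1 + R ^ 2 - normSq C))
    (ha : a = C / (1 - R * r)) :
    ‖a‖ < 1 ∧ mobius a '' ball C R = ball 0 r := by
  have hRr : R * r < R := mul_lt_of_lt_one_right hR hr1
  have hu : 0 < 1 - R * r := by linarith [norm_nonneg C]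
  have haC : (1 - R * r) * a = C := by
    rw [ha, mul_div_cancel₀]
    exact_mod_cast hu.ne'
  have ha1 : ‖a‖ < 1 := by
    rw [ha, norm_div, ← ofReal_one, ← ofReal_mul, ← ofReal_sub, norm_real,
      Real.norm_of_nonneg hu.le, div_lt_one hu]
    linarith
  have hK : r ^ 2 * normSq C < (1 - R * r) ^ 2 := by
    have hrC : r * ‖C‖ < 1 - R * r := by nlinarith [norm_nonneg C]
    rw [normSq_eq_norm_sq, ← mul_pow]
    exact pow_lt_pow_left₀ hrC (by positivity) two_ne_zero
  have ha' : normSq a ≠ 1 := by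
    rw [normSq_eq_norm_sq]
    nlinarith [norm_nonneg a]
  refine ⟨ha1, mobius_image_eq ha' (fun x hx => ?_) (fun z hz => ?_) (fun x hx => ?_)⟩
  · refine conj_mul_sub_one_ne_zero ha1 ?_
    rw [mem_ball, dist_eq] at hx
    linarith [norm_le_norm_add_norm_sub' x C]
  · rw [mem_ball_zero_iff] at hz
    exact conj_mul_sub_one_ne_zero ha1 (by linarith)
  · rw [mem_ball, mem_ball_zero_iff, dist_eq]
    exact (norm_mobius_lt_iff hR.le hr0 haC hrel hK hx).symm

theorem mobius_image_ball_to_concentric_general (c ζ R : ℝ) (hc0 : 0 ≤ c)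
    (hR0 : 0 < R) (hR1 : R < 1 - c) :
    ∀ r a, r = (1 + R ^ 2 - c ^ 2 -
        Real.sqrt (((1 - R) ^ 2 - c ^ 2) * ((1 + R) ^ 2 - c ^ 2))) / (2 * R) →
      a = ((c : ℂ) * Complex.exp (Complex.I * ζ)) / (1 - R * r) →
      0 < r ∧ r < 1 ∧ ‖a‖ < 1 ∧
        mobius a '' Metric.ball ((c : ℂ) * Complex.exp (Complex.I * ζ)) R =
          Metric.ball (0 : ℂ) r := by
  intro r a hr ha
  have hC : ‖(c : ℂ) * exp (I * ζ)‖ = c := by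
    rw [norm_mul, mul_comm I, norm_exp_ofReal_mul_I, mul_one, norm_real, Real.norm_of_nonneg hc0]
  obtain ⟨hr0, hr1, hrel⟩ :=
    pos_lt_one_and_eq_of_smaller_root (r := r) (B := 1 + R ^ 2 - c ^ 2) hR0 (by nlinarith)
      (by rw [hr]; ring_nf)
  rw [← hC, ← normSq_eq_norm_sq] at hrel
  exact ⟨hr0, hr1, mobius_image_ball hR0 hr0.le hr1 (by linarith) hrel ha⟩

theorem mobius_image_ball_to_concentric (c ζ R : ℝ) (hc0 : 0 ≤ c) (hc1 : c < 1)
    (hR0 : 0 < R) (hR1 : R < 1 - c) :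
    ∀ r a, r = (1 + R ^ 2 - c ^ 2 -
        Real.sqrt (((1 - R) ^ 2 - c ^ 2) * ((1 + R) ^ 2 - c ^ 2))) / (2 * R) →
      a = ((c : ℂ) * Complex.exp (Complex.I * ζ)) / (1 - R * r) →
      0 < r ∧ r < 1 ∧ ‖a‖ < 1 ∧
        mobius a '' Metric.ball ((c : ℂ) * Complex.exp (Complex.I * ζ)) R =
          Metric.ball (0 : ℂ) r :=
  mobius_image_ball_to_concentric_general c ζ R hc0 hR0 hR1
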